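/- arXiv:1912.08763 — 2 statements merged into one kernel-verified Lean document; each statement's English description precedes it below -/
import Mathlib

section
/- A pair (l,d) dominates a pair (l',d') if and only if q·l − min(l,r) ≥ l', where q ≥ 1 and 0 ≤ r ≤ d−1 are the unique integers with d' = q·d − r. -/
/-!
Write `d' = q * d - r`. If `(l,d)` dominates `(l',d')`, take `X = Fin d'` ordered by cardinality
and split into singletons: some `d`-partition of `X` has all its `l`-unions of size at least `l'`.
But the `l` smallest parts of a `d`-partition of `q * d - r` points have at most
`q * l - min l r` points in total: either all of them have fewer than `q` points, or all the other
parts have at least `q`. Conversely, grouping the parts of a `d'`-partition round-robin (part `j`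
into group `j % d`) gives `d - r` groups of `q` parts and `r` groups of `q - 1` parts, so any `l`
groups contain at least `q * l - min l r ≥ l'` of the original parts, and monotonicity of the
preorder concludes.
-/

open Finset

/-- A partition of the finite type `α` into `d` (possibly empty) pairwise-disjoint parts. -/
def IsPartition {α : Type} [Fintype α] [DecidableEq α] (d : ℕ) (Y : Fin d → Finset α) : Prop :=
  (∀ i j : Fin d, i ≠ j → Disjoint (Y i) (Y j)) ∧
    Finset.univ.biUnion Y = (Finset.univ : Finset α)

/-- `MMSLe pref l d l' d'` says that the `l`-out-of-`d` maximin share of `α` is at least as good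
(w.r.t. `pref`, where `pref A B` means `A ⪰ B`) as the `l'`-out-of-`d'` maximin share:
for every `d'`-partition `Y'` there is a `d`-partition `Y` whose minimal `l`-part union is
`⪰` some `l'`-part union of `Y'` (hence `⪰` the minimal one). -/
def MMSLe {α : Type} [Fintype α] [DecidableEq α]
    (pref : Finset α → Finset α → Prop) (l d l' d' : ℕ) : Prop :=
  ∀ Y' : Fin d' → Finset α, IsPartition d' Y' →
    ∃ Y : Fin d → Finset α, IsPartition d Y ∧
      ∀ S : Finset (Fin d), S.card = l →
        ∃ S' : Finset (Fin d'), S'.card = l' ∧ pref (S.biUnion Y) (S'.biUnion Y')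

/-- `(l,d)` dominates `(l',d')`: for every finite set with a monotone total preorder on
its subsets, the `l`-out-of-`d` MMS is at least as good as the `l'`-out-of-`d'` MMS. -/
def Dominates (l d l' d' : ℕ) : Prop :=
  ∀ (α : Type) (iF : Fintype α) (iD : DecidableEq α)
    (pref : Finset α → Finset α → Prop),
    (∀ A B : Finset α, B ⊆ A → pref A B) →
    (∀ A B : Finset α, pref A B ∨ pref B A) →
    (∀ A B C : Finset α, pref A B → pref B C → pref A C) →
    @MMSLe α iF iD pref l d l' d'

section Counting

variable {ι : Type*} [Fintype ι] [DecidableEq ι] {q r : ℕ}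

theorem exists_card_eq_forall_le_of_notMem {β : Type*} [LinearOrder β] (g : ι → β) {l : ℕ}
    (hl : l ≤ Fintype.card ι) :
    ∃ S : Finset ι, #S = l ∧ ∀ i ∈ S, ∀ j ∉ S, g i ≤ g j := by
  induction l with
  | zero => exact ⟨∅, rfl, by simp⟩
  | succ l ih =>
    obtain ⟨S, hS, hlow⟩ := ih (by omega)
    have hne : Sᶜ.Nonempty := by
      rw [← card_pos, card_compl]
      omega
    obtain ⟨j, hj, hmin⟩ := Sᶜ.exists_min_image g hne
    rw [mem_compl] at hj
    refine ⟨insert j S, by rw [card_insert_of_notMem hj, hS], fun i hi k hk => ?_⟩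
    rw [mem_insert, not_or] at hk
    rcases mem_insert.1 hi with rfl | hi
    · exact hmin k (mem_compl.2 hk.2)
    · exact hlow i hi k hk.2

theorem sum_add_min_le_of_forall_le_of_notMem (g : ι → ℕ) (S : Finset ι)
    (hlow : ∀ i ∈ S, ∀ j ∉ S, g i ≤ g j) (hsum : ∑ i, g i + r = q * Fintype.card ι) :
    ∑ i ∈ S, g i + min #S r ≤ q * #S := by
  by_cases hsmall : ∀ i ∈ S, g i < q
  · have : ∑ i ∈ S, (g i + 1) ≤ ∑ _i ∈ S, q := sum_le_sum hsmall
    rw [sum_add_distrib, sum_const, sum_const, smul_eq_mul, smul_eq_mul, mul_one] at this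
    have := min_le_left #S r
    linarith
  · push Not at hsmall
    obtain ⟨i, hi, hqi⟩ := hsmall
    have hlarge : ∑ _j ∈ Sᶜ, q ≤ ∑ j ∈ Sᶜ, g j :=
      sum_le_sum fun j hj => hqi.trans (hlow i hi j (mem_compl.1 hj))
    rw [sum_const, smul_eq_mul, card_compl] at hlarge
    have hsplit := sum_add_sum_compl S g
    have hcard : q * Fintype.card ι = q * #S + (Fintype.card ι - #S) * q := by
      rw [mul_comm _ q, ← mul_add, Nat.add_sub_cancel' (card_le_univ S)]
    have := min_le_right #S r
    linarith

theorem exists_card_eq_sum_add_min_le (g : ι → ℕ) {l : ℕ} (hl : l ≤ Fintype.card ι)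
    (hsum : ∑ i, g i + r = q * Fintype.card ι) :
    ∃ S : Finset ι, #S = l ∧ ∑ i ∈ S, g i + min l r ≤ q * l := by
  obtain ⟨S, rfl, hlow⟩ := exists_card_eq_forall_le_of_notMem g hl
  exact ⟨S, rfl, sum_add_min_le_of_forall_le_of_notMem g S hlow hsum⟩

end Counting

namespace IsPartition

variable {α : Type} [Fintype α] [DecidableEq α] {d : ℕ} {Y : Fin d → Finset α}

theorem card_biUnion (hY : IsPartition d Y) (S : Finset (Fin d)) :
    #(S.biUnion Y) = ∑ i ∈ S, #(Y i) :=
  Finset.card_biUnion fun i _ j _ hij => hY.1 i j hij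

theorem sum_card (hY : IsPartition d Y) : ∑ i, #(Y i) = Fintype.card α := by
  rw [← hY.card_biUnion, hY.2, card_univ]

theorem fiberwise_biUnion {d' : ℕ} (hY : IsPartition d Y) (ψ : Fin d → Fin d') :
    IsPartition d' fun k => ({i | ψ i = k} : Finset (Fin d)).biUnion Y := by
  refine ⟨fun k k' hkk' => ?_, ?_⟩
  · simp only [disjoint_biUnion_left, disjoint_biUnion_right, mem_filter_univ]
    rintro j rfl i rfl
    exact hY.1 i j fun hij => hkk' (by rw [hij])
  · rw [← biUnion_biUnion, ← hY.2]
    congr 1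
    ext i
    simp

end IsPartition

theorem isPartition_singleton (n : ℕ) : IsPartition n fun i : Fin n => {i} :=
  ⟨fun _ _ hij => disjoint_singleton.2 hij, by ext; simp⟩

theorem exists_partition_of_dominates {l d l' d' : ℕ} (h : Dominates l d l' d') :
    ∃ Y : Fin d → Finset (Fin d'), IsPartition d Y ∧ ∀ S : Finset (Fin d), #S = l →
      l' ≤ #(S.biUnion Y) := by
  obtain ⟨Y, hY, hcover⟩ := h (Fin d') _ _ (fun A B => #B ≤ #A) (fun _ _ => card_le_card)
    (fun _ _ => le_total _ _) (fun _ _ _ h₁ h₂ => h₂.trans h₁) _ (isPartition_singleton d')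
  refine ⟨Y, hY, fun S hS => ?_⟩
  obtain ⟨S', rfl, hS'⟩ := hcover S hS
  rwa [biUnion_singleton_eq_self] at hS'

theorem mmsLe_of_le_card_filter_mem {α : Type} [Fintype α] [DecidableEq α]
    {pref : Finset α → Finset α → Prop} (hpref : ∀ A B : Finset α, B ⊆ A → pref A B)
    {l d l' d' : ℕ} (ψ : Fin d' → Fin d)
    (hψ : ∀ S : Finset (Fin d), #S = l → l' ≤ #{j | ψ j ∈ S}) : MMSLe pref l d l' d' := by
  intro Y' hY'
  refine ⟨_, IsPartition.fiberwise_biUnion hY' ψ, fun S hS => ?_⟩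
  obtain ⟨S', hS'S, hS'⟩ := exists_subset_card_eq (hψ S hS)
  refine ⟨S', hS', hpref _ _ ?_⟩
  rw [← biUnion_biUnion]
  refine biUnion_subset_biUnion_of_subset_left Y' fun j hj => ?_
  simpa using hS'S hj

section RoundRobin

variable {d d' q r : ℕ}

theorem card_filter_val_mod_eq (hd : 0 < d) (i : Fin d) :
    #{j : Fin d' | (j : ℕ) % d = i} = d' / d + if (i : ℕ) < d' % d then 1 else 0 := by
  rw [← Nat.mod_eq_of_lt i.isLt, ← Nat.count_modEq_card _ hd, Nat.mod_eq_of_lt i.isLt,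
    Nat.count_eq_card_filter_range, ← card_map Fin.valEmbedding, map_filter']
  congr 1
  ext x
  simp only [mem_filter, mem_range, Nat.ModEq, Nat.mod_eq_of_lt i.isLt]
  simp [Fin.exists_iff]
  tauto

theorem le_card_filter_val_mod_eq_add (hr : r < d) (hqd : d' + r = q * d) (i : Fin d) :
    q ≤ #{j : Fin d' | (j : ℕ) % d = i} + if d - r ≤ (i : ℕ) then 1 else 0 := by
  have hd : 0 < d := by omega
  rw [card_filter_val_mod_eq hd]
  rcases Nat.eq_zero_or_pos r with rfl | hr₀
  · rw [add_zero] at hqd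
    rw [hqd, Nat.mul_div_cancel _ hd]
    omega
  · obtain ⟨q, rfl⟩ : ∃ q₀, q = q₀ + 1 :=
      Nat.exists_eq_add_one.2 (Nat.pos_of_ne_zero (by rintro rfl; omega))
    obtain ⟨hdiv, hmod⟩ : d' / d = q ∧ d' % d = d - r := by
      rw [add_mul, one_mul] at hqd
      rw [Nat.div_mod_unique hd, mul_comm]
      omega
    rw [hdiv, hmod]
    split_ifs <;> omega

theorem card_filter_sub_le_val (hr : r ≤ d) : #{i : Fin d | d - r ≤ (i : ℕ)} = r := by
  have hsplit := card_filter_add_card_filter_not (s := (univ : Finset (Fin d)))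
    (p := fun i => (i : ℕ) < d - r)
  simp only [not_lt, Fin.card_filter_val_lt, card_univ, Fintype.card_fin] at hsplit
  omega

theorem le_card_filter_val_mod_mem_add_min [NeZero d] (hr : r < d) (hqd : d' + r = q * d)
    (S : Finset (Fin d)) : q * #S ≤ #{j : Fin d' | Fin.ofNat d j ∈ S} + min #S r := by
  have hfiber (i : Fin d) :
      #{j : Fin d' | Fin.ofNat d j = i} = #{j : Fin d' | (j : ℕ) % d = i} := by
    simp only [Fin.ext_iff, Fin.val_ofNat]
  have hlarge : #{i ∈ S | d - r ≤ i.val} ≤ min #S r :=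
    le_min (card_filter_le _ _) <| (card_le_card (filter_subset_filter _ (subset_univ S))).trans
      (card_filter_sub_le_val hr.le).le
  calc q * #S = ∑ _i ∈ S, q := by rw [sum_const, smul_eq_mul, mul_comm]
    _ ≤ ∑ i ∈ S, (#{j : Fin d' | (j : ℕ) % d = i} + if d - r ≤ (i : ℕ) then 1 else 0) :=
      sum_le_sum fun i _ => le_card_filter_val_mod_eq_add hr hqd i
    _ = #{j : Fin d' | Fin.ofNat d j ∈ S} + #{i ∈ S | d - r ≤ i.val} := by
      rw [sum_add_distrib, sum_boole, Nat.cast_id, ← sum_card_fiberwise_eq_card_filter]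
      simp only [hfiber]
    _ ≤ _ := by omega

end RoundRobin

theorem le_of_dominates {l d l' d' q r : ℕ} (hld : l ≤ d) (hqd : d' + r = q * d)
    (h : Dominates l d l' d') : l' + min l r ≤ q * l := by
  obtain ⟨Y, hY, hcover⟩ := exists_partition_of_dominates h
  obtain ⟨S, hS, hsum⟩ := exists_card_eq_sum_add_min_le (l := l) (fun i => #(Y i))
    (by rwa [Fintype.card_fin]) (by rwa [hY.sum_card, Fintype.card_fin, Fintype.card_fin])
  have := hcover S hS
  rw [hY.card_biUnion] at this
  omega

theorem dominates_of_le {l d l' d' q r : ℕ} (hr : r < d) (hqd : d' + r = q * d)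
    (h : l' + min l r ≤ q * l) : Dominates l d l' d' := by
  have : NeZero d := ⟨by omega⟩
  intro α _ _ pref hpref _ _
  refine mmsLe_of_le_card_filter_mem hpref (fun j : Fin d' => Fin.ofNat d j) fun S hS => ?_
  have := le_card_filter_val_mod_mem_add_min hr hqd S
  rw [hS] at this
  omega

theorem stmt3_general (l d l' d' q r : ℕ) (hld : l ≤ d) (hr : r < d) (hqd : d' + r = q * d) :
    Dominates l d l' d' ↔ l' + min l r ≤ q * l :=
  ⟨le_of_dominates hld hqd, dominates_of_le hr hqd⟩

theorem stmt3 (l d l' d' q r : ℕ) (hl : 1 ≤ l) (hld : l ≤ d) (hl' : 1 ≤ l') (hld' : l' ≤ d')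
    (hq : 1 ≤ q) (hr : r < d) (hqd : d' + r = q * d) :
    Dominates l d l' d' ↔ l' + min l r ≤ q * l :=
  stmt3_general l d l' d' q r hld hr hqd
end

section
/- For integers 1 ≤ l ≤ d and q ≥ 1, the pair (l,d) dominates (q·l, q·d): for every finite set X with a monotone total preorder on subsets, MMS(X,l,d) ⪰ MMS(X,q·l,q·d). That is, if l'/d' is a non-reduced fraction and l/d its reduced form, the l-out-of-d MMS is at least as good as the l'-out-of-d' MMS. -/
/-!
Given a partition of `X` into `q * d` parts, group the parts into `d` blocks of `q` parts each and
take each block's union as a new part. A union of `l` new parts is then exactly a union of `q * l`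
old parts, so every `l`-bundle of the new partition is matched by a `q * l`-bundle of the old one.
-/

open Finset

theorem Finset.card_filter_snd_equiv_eq {ι κ β : Type*} [Fintype ι] [Fintype κ]
    [DecidableEq β] (e : ι ≃ κ × β) (b : β) : #{x | (e x).2 = b} = Fintype.card κ := by
  rw [← card_map e.toEmbedding]
  convert card_product (univ : Finset κ) {b} using 2
  · ext ⟨a, b'⟩; simp [eq_comm]
  · simp

theorem Finset.card_filter_mem_eq_mul {ι κ : Type*} [Fintype ι] [DecidableEq κ] {f : ι → κ}
    {q : ℕ} (hf : ∀ b, #{a | f a = b} = q) (S : Finset κ) : #{a | f a ∈ S} = q * #S := by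
  rw [card_eq_sum_card_fiberwise (s := {a | f a ∈ S}) (t := S) fun a ha => (mem_filter.1 ha).2,
    mul_comm, ← smul_eq_mul, ← sum_const]
  refine sum_congr rfl fun b hb => ?_
  rw [filter_filter, ← hf b]
  congr 1
  exact filter_congr fun a _ => ⟨And.right, fun h => ⟨h ▸ hb, h⟩⟩

section MergeParts

variable {α : Type} [DecidableEq α] {n d : ℕ}

def mergeParts (f : Fin n → Fin d) (Y : Fin n → Finset α) (i : Fin d) : Finset α :=
  (univ.filter fun k => f k = i).biUnion Y

theorem biUnion_mergeParts (f : Fin n → Fin d) (Y : Fin n → Finset α) (S : Finset (Fin d)) :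
    S.biUnion (mergeParts f Y) = (univ.filter fun k => f k ∈ S).biUnion Y := by
  ext a
  simp only [mergeParts, mem_biUnion, mem_filter, mem_univ, true_and]
  constructor
  · rintro ⟨i, hi, k, rfl, ha⟩
    exact ⟨k, hi, ha⟩
  · rintro ⟨k, hk, ha⟩
    exact ⟨f k, hk, k, rfl, ha⟩

theorem IsPartition.mergeParts [Fintype α] {Y : Fin n → Finset α} (hY : IsPartition n Y)
    (f : Fin n → Fin d) : IsPartition d (mergeParts f Y) := by
  obtain ⟨hdisj, hcover⟩ := hY
  refine ⟨fun i j hij => ?_, ?_⟩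
  · simp only [_root_.mergeParts, disjoint_biUnion_left, disjoint_biUnion_right, mem_filter,
      mem_univ, true_and]
    rintro k rfl k' rfl
    exact hdisj k' k fun h => hij (congrArg f h)
  · rw [biUnion_mergeParts, filter_true_of_mem fun k _ => mem_univ (f k), hcover]

theorem mmsLe_of_card_fiber_eq [Fintype α] {pref : Finset α → Finset α → Prop}
    (hrefl : ∀ A, pref A A) {q : ℕ} (f : Fin n → Fin d) (hf : ∀ i, #{k | f k = i} = q)
    (l : ℕ) :
    MMSLe pref l d (q * l) n := by
  intro Y hY
  refine ⟨mergeParts f Y, hY.mergeParts f, fun S hS =>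
    ⟨univ.filter fun k => f k ∈ S, ?_, ?_⟩⟩
  · rw [card_filter_mem_eq_mul hf, hS]
  · rw [biUnion_mergeParts]
    exact hrefl _

end MergeParts

theorem stmt8_general {α : Type} [Fintype α] [DecidableEq α]
    (l d q : ℕ)
    (pref : Finset α → Finset α → Prop)
    (hmono : ∀ A B : Finset α, B ⊆ A → pref A B) :
    MMSLe pref l d (q * l) (q * d) :=
  -- the blocks are the residue classes modulo `d`
  mmsLe_of_card_fiber_eq (fun A => hmono A A subset_rfl) Fin.modNat
    (fun i => by simpa using card_filter_snd_equiv_eq finProdFinEquiv.symm i) l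

theorem stmt8 {α : Type} [Fintype α] [DecidableEq α]
    (l d q : ℕ) (hl : 1 ≤ l) (hld : l ≤ d) (hq : 1 ≤ q)
    (pref : Finset α → Finset α → Prop)
    (hmono : ∀ A B : Finset α, B ⊆ A → pref A B)
    (htotal : ∀ A B : Finset α, pref A B ∨ pref B A)
    (htrans : ∀ A B C : Finset α, pref A B → pref B C → pref A C) :
    MMSLe pref l d (q * l) (q * d) :=
  stmt8_general l d q pref hmono
end
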